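/- Let P(x) ∈ ℂ[x] be a polynomial and let h, r be integers with h ≠ 0 such that the h-th powers r_1^h, ..., r_m^h of the roots of the characteristic polynomial are pairwise distinct and none of them equals 1. Then there is exactly one tuple (P_1(x), P_2(x), ..., P_{m+1}(x)) ∈ ℂ[x]^{m+1} satisfying, for every positive integer n, ∑_{k=1}^{n} P(k)·s_{hk+r} = (∑_{k=1}^{m} P_k(n)·s_{(n+k)h+r}) + P_{m+1}(n); i.e., any two such tuples of polynomials coincide. -/

import Mathlib

open Polynomial


private lemma lc_taylor (p : ℂ[X]) : (taylor 1 p).leadingCoeff = p.leadingCoeff := by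
  rcases eq_or_ne p 0 with rfl | hp
  · simp
  · have h1 : (X + C 1 : ℂ[X]).natDegree = 1 := natDegree_X_add_C 1
    rw [taylor_apply,
      leadingCoeff_comp (by rw [h1]; norm_num), leadingCoeff_X_add_C, one_pow, mul_one]

private lemma coeff_taylor_nd (p : ℂ[X]) : (taylor 1 p).coeff p.natDegree = p.leadingCoeff := by
  conv_lhs => rw [← natDegree_taylor p 1]
  rw [coeff_natDegree]
  exact lc_taylor p

private lemma eq_zero_of_eval_nat (N : ℕ) (p : ℂ[X])
    (h : ∀ n : ℕ, N ≤ n → p.eval (n : ℂ) = 0) : p = 0 := by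
  apply Polynomial.eq_zero_of_infinite_isRoot
  apply Set.Infinite.mono (s := (fun n : ℕ => (n : ℂ)) '' Set.Ici N)
  · rintro _ ⟨n, hn, rfl⟩; exact h n hn
  · exact (Set.Ici_infinite N).image (Set.injOn_of_injective Nat.cast_injective)

private lemma natDegree_taylor_sub (p : ℂ[X]) (d : ℕ) (hp : p.natDegree ≤ d + 1) :
    (taylor 1 p - p).natDegree ≤ d := by
  rw [natDegree_le_iff_coeff_eq_zero]
  intro k hk
  rw [coeff_sub]
  have h1 : p.natDegree ≤ k := by omega
  rcases eq_or_lt_of_le h1 with he | hl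
  · subst he
    rw [coeff_taylor_nd, coeff_natDegree, sub_self]
  · rw [coeff_eq_zero_of_natDegree_lt (by rwa [natDegree_taylor]),
      coeff_eq_zero_of_natDegree_lt hl, sub_zero]

private lemma degree_taylor_le (p : ℂ[X]) : (taylor 1 p).degree ≤ p.degree := by
  rcases eq_or_ne p 0 with rfl | hp
  · simp
  · have h2 : taylor 1 p ≠ 0 := fun h => hp (by
      have := lc_taylor p
      rw [h, leadingCoeff_zero] at this
      exact leadingCoeff_eq_zero.mp this.symm)
    rw [degree_eq_natDegree hp, degree_eq_natDegree h2, natDegree_taylor]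

private lemma poly_exp_indep {ι : Type} [DecidableEq ι] (N : ℕ) (t : Finset ι) :
    ∀ (y : ι → ℂ) (R : ι → ℂ[X]),
      (∀ i ∈ t, y i ≠ 0) → (Set.InjOn y t) →
      (∀ n : ℕ, N ≤ n → ∑ j ∈ t, (R j).eval (n : ℂ) * y j ^ n = 0) →
      ∀ j ∈ t, R j = 0 := by
  induction t using Finset.strongInduction with
  | _ t ih =>
  intro y R hy hinj hvan j0 hj0
  suffices hall : ∀ d : ℕ, ∀ R : ι → ℂ[X], (R j0).natDegree ≤ d →
      (∀ n : ℕ, N ≤ n → ∑ j ∈ t, (R j).eval (n : ℂ) * y j ^ n = 0) →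
      ∀ j ∈ t, R j = 0 by
    exact hall (R j0).natDegree R le_rfl hvan j0 hj0
  have hshift : ∀ R : ι → ℂ[X],
      (∀ n : ℕ, N ≤ n → ∑ j ∈ t, (R j).eval (n : ℂ) * y j ^ n = 0) →
      (∀ n : ℕ, N ≤ n → ∑ j ∈ t,
        ((C (y j) * taylor 1 (R j) - C (y j0) * R j)).eval (n : ℂ) * y j ^ n = 0) := by
    intro R hvanR n hn
    have e1 := hvanR (n + 1) (by omega)
    have e2 := hvanR n hn
    calc ∑ j ∈ t, ((C (y j) * taylor 1 (R j) - C (y j0) * R j)).eval (n : ℂ) * y j ^ n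
        = ∑ j ∈ t, ((R j).eval ((n : ℂ) + 1) * y j ^ (n + 1)
            - y j0 * ((R j).eval (n : ℂ) * y j ^ n)) := by
          apply Finset.sum_congr rfl
          intro j _
          simp only [eval_sub, eval_mul, eval_C, taylor_eval]
          ring
      _ = 0 := by
          rw [Finset.sum_sub_distrib, ← Finset.mul_sum, e2, mul_zero, sub_zero]
          have : ((n : ℂ) + 1) = ((n + 1 : ℕ) : ℂ) := by push_cast; ring
          rw [this, e1]
  have hkey : ∀ R : ι → ℂ[X], ∀ j ∈ t, j ≠ j0 →
      C (y j) * taylor 1 (R j) - C (y j0) * R j = 0 → R j = 0 := by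
    intro R j hj hjne h0
    by_contra hRj
    have hc := congrArg (fun p : ℂ[X] => p.coeff (R j).natDegree) h0
    simp only [coeff_sub, coeff_C_mul, coeff_taylor_nd, coeff_natDegree, coeff_zero] at hc
    have hyne : y j ≠ y j0 := fun he => hjne (hinj hj hj0 he)
    have h2 : (y j - y j0) * (R j).leadingCoeff = 0 := by linear_combination hc
    rcases mul_eq_zero.mp h2 with h | h
    · exact hyne (by linear_combination h)
    · exact hRj (leadingCoeff_eq_zero.mp h)
  have hfinish : ∀ R : ι → ℂ[X],
      (∀ n : ℕ, N ≤ n → ∑ j ∈ t, (R j).eval (n : ℂ) * y j ^ n = 0) →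
      (∀ j ∈ t.erase j0, R j = 0) → ∀ j ∈ t, R j = 0 := by
    intro R hvanR hz
    have hj0z : R j0 = 0 := by
      apply eq_zero_of_eval_nat N
      intro n hn
      have e := hvanR n hn
      rw [← Finset.sum_erase_add t _ hj0, Finset.sum_eq_zero
        (fun j hj => by rw [hz j hj, eval_zero, zero_mul]), zero_add] at e
      have := pow_ne_zero n (hy j0 hj0)
      exact (mul_eq_zero.mp e).resolve_right this
    intro j hj
    rcases eq_or_ne j j0 with rfl | hne
    · exact hj0z
    · exact hz j (Finset.mem_erase.mpr ⟨hne, hj⟩)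
  intro d
  induction d with
  | zero =>
    intro R hdeg hvanR
    have hR'j0 : C (y j0) * taylor 1 (R j0) - C (y j0) * R j0 = 0 := by
      rw [eq_C_of_natDegree_le_zero hdeg]
      simp
    apply hfinish R hvanR
    have hvan' := hshift R hvanR
    have hvan'' : ∀ n : ℕ, N ≤ n → ∑ j ∈ t.erase j0,
        ((C (y j) * taylor 1 (R j) - C (y j0) * R j)).eval (n : ℂ) * y j ^ n = 0 := by
      intro n hn
      have e := hvan' n hn
      rw [← Finset.sum_erase_add t _ hj0, hR'j0, eval_zero, zero_mul, add_zero] at e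
      exact e
    have hR'z := ih (t.erase j0) (Finset.erase_ssubset hj0) y
      (fun j => C (y j) * taylor 1 (R j) - C (y j0) * R j)
      (fun i hi => hy i (Finset.mem_of_mem_erase hi))
      (hinj.mono (by exact_mod_cast Finset.erase_subset j0 t)) hvan''
    intro j hj
    exact hkey R j (Finset.mem_of_mem_erase hj) (Finset.ne_of_mem_erase hj) (hR'z j hj)
  | succ d ihd =>
    intro R hdeg hvanR
    set R' : ι → ℂ[X] := fun j => C (y j) * taylor 1 (R j) - C (y j0) * R j with hR'
    have hdeg' : (R' j0).natDegree ≤ d := by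
      have : R' j0 = C (y j0) * (taylor 1 (R j0) - R j0) := by rw [hR']; ring
      rw [this]
      exact le_trans (natDegree_C_mul_le _ _) (natDegree_taylor_sub _ d hdeg)
    have hR'z := ihd R' hdeg' (hshift R hvanR)
    apply hfinish R hvanR
    intro j hj
    exact hkey R j (Finset.mem_of_mem_erase hj) (Finset.ne_of_mem_erase hj)
      (hR'z j (Finset.mem_of_mem_erase hj))

private lemma sum_geom_poly (x : ℂ) (hx1 : x ≠ 1) (P : ℂ[X]) :
    ∃ Q : ℂ[X], ∀ n : ℕ, ∑ k ∈ Finset.Icc 1 n, P.eval (k : ℂ) * x ^ k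
      = Q.eval (n : ℂ) * x ^ n - Q.eval 0 := by
  set d := P.natDegree with hd
  set V := degreeLT ℂ (d + 1) with hV
  have hmem : ∀ q : ℂ[X], q.degree < (d + 1 : ℕ) → x • taylor 1 q - q ∈ V := by
    intro q hq
    rw [hV, mem_degreeLT]
    refine lt_of_le_of_lt (degree_sub_le _ _) (max_lt (lt_of_le_of_lt ?_ hq) hq)
    exact le_trans (degree_smul_le _ _) (degree_taylor_le q)
  set T : V →ₗ[ℂ] V := {
    toFun := fun q => ⟨x • taylor 1 (q : ℂ[X]) - (q : ℂ[X]), hmem q (mem_degreeLT.mp q.2)⟩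
    map_add' := by
      intro p q
      ext1
      simp only [Submodule.coe_add, map_add, smul_add]
      ring
    map_smul' := by
      intro c q
      ext1
      simp only [Submodule.coe_smul, map_smul, RingHom.id_apply]
      rw [smul_comm]
      simp [smul_sub]
  } with hT
  have hfin : Module.Finite ℂ V := Module.Finite.equiv (Polynomial.degreeLTEquiv ℂ (d + 1)).symm
  have hinj : Function.Injective T := by
    intro p q hpq
    have heq := congrArg (fun z : V => (z : ℂ[X])) hpq
    simp only [hT, LinearMap.coe_mk, AddHom.coe_mk] at heq
    set D : ℂ[X] := (p : ℂ[X]) - (q : ℂ[X]) with hD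
    have h1 : x • taylor 1 D = D := by
      rw [hD, map_sub, smul_sub]
      linear_combination heq
    ext1
    by_contra hne
    have hne' : D ≠ 0 := sub_ne_zero.mpr hne
    have hc := congrArg (fun z : ℂ[X] => z.coeff D.natDegree) h1
    simp only [coeff_smul, coeff_taylor_nd, smul_eq_mul, coeff_natDegree] at hc
    have h3 : (x - 1) * D.leadingCoeff = 0 := by linear_combination hc
    rcases mul_eq_zero.mp h3 with h | h
    · exact hx1 (by linear_combination h)
    · exact hne' (leadingCoeff_eq_zero.mp h)
  have hsurj : Function.Surjective T := (LinearMap.injective_iff_surjective).mp hinj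
  have hPmem : x • taylor 1 P ∈ V := by
    rw [hV, mem_degreeLT]
    refine lt_of_le_of_lt (le_trans (degree_smul_le _ _) (degree_taylor_le P)) ?_
    exact lt_of_le_of_lt degree_le_natDegree (by exact_mod_cast lt_add_one d)
  obtain ⟨Q0, hQ0⟩ := hsurj ⟨x • taylor 1 P, hPmem⟩
  set Q : ℂ[X] := (Q0 : ℂ[X]) with hQdef
  have hQ : x • taylor 1 Q - Q = x • taylor 1 P := congrArg (fun z : V => (z : ℂ[X])) hQ0
  refine ⟨Q, ?_⟩
  intro n
  induction n with
  | zero => simp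
  | succ n ihn =>
    rw [Finset.sum_Icc_succ_top (by omega : 1 ≤ n + 1), ihn]
    have he := congrArg (fun p : ℂ[X] => p.eval (n : ℂ)) hQ
    simp only [eval_sub, eval_smul, taylor_eval, smul_eq_mul] at he
    push_cast
    linear_combination (-(x ^ n) : ℂ) * he


private lemma seq_ext_zero (m : ℕ) (hm : 0 < m) (a : Fin m → ℂ) (ha1 : a ⟨0, hm⟩ ≠ 0)
    (u : ℤ → ℂ) (hrec : ∀ k : ℤ, u (k + m) = ∑ i : Fin m, a i * u (k + (i : ℕ)))
    (h0 : ∀ i : Fin m, u i = 0) : ∀ k : ℤ, u k = 0 := by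
  have key : ∀ k : ℤ, ∀ j : ℕ, j < m → u (k + j) = 0 := by
    intro k
    induction k using Int.induction_on with
    | zero =>
      intro j hj
      have := h0 ⟨j, hj⟩
      simpa using this
    | succ k ihk =>
      intro j hj
      rcases lt_or_ge (j + 1) m with hlt | hge
      · have := ihk (j + 1) hlt
        have harg : (k : ℤ) + 1 + (j : ℕ) = (k : ℤ) + ((j + 1 : ℕ) : ℤ) := by push_cast; ring
        rw [harg]
        exact this
      · have hjm : j = m - 1 := by omega
        have harg : (k : ℤ) + 1 + (j : ℕ) = (k : ℤ) + (m : ℕ) := by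
          subst hjm; push_cast; omega
        rw [harg, hrec k]
        apply Finset.sum_eq_zero
        intro i _
        rw [ihk i i.2, mul_zero]
    | pred k ihk =>
      intro j hj
      rcases Nat.eq_zero_or_pos j with rfl | hpos
      case inr =>
        have harg : (-(k : ℤ) - 1) + (j : ℕ) = (-(k : ℤ)) + ((j - 1 : ℕ) : ℤ) := by
          push_cast [hpos]; omega
        rw [harg]
        exact ihk (j - 1) (by omega)
      case inl =>
        have hrk := hrec (-(k : ℤ) - 1)
        have hlhs : u (-(k : ℤ) - 1 + (m : ℕ)) = 0 := by
          have harg : (-(k : ℤ) - 1) + (m : ℕ) = (-(k : ℤ)) + ((m - 1 : ℕ) : ℤ) := by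
            push_cast [hm]; omega
          rw [harg]
          exact ihk (m - 1) (by omega)
        rw [hlhs] at hrk
        have hsum : ∑ i : Fin m, a i * u (-(k : ℤ) - 1 + (i : ℕ))
            = a ⟨0, hm⟩ * u (-(k : ℤ) - 1) := by
          rw [Finset.sum_eq_single ⟨0, hm⟩]
          · simp
          · intro i _ hine
            have hipos : 0 < (i : ℕ) := by
              rcases Nat.eq_zero_or_pos (i : ℕ) with h | h
              · exact absurd (Fin.ext h) hine
              · exact h
            have harg : (-(k : ℤ) - 1) + ((i : ℕ) : ℤ) = (-(k : ℤ)) + (((i : ℕ) - 1 : ℕ) : ℤ) := by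
              push_cast [hipos]; omega
            rw [harg, ihk ((i : ℕ) - 1) (by omega), mul_zero]
          · intro habs
            exact absurd (Finset.mem_univ _) habs
        rw [hsum] at hrk
        have := (mul_eq_zero.mp hrk.symm).resolve_left ha1
        simpa using this
  intro k
  have := key k 0 hm
  simpa using this

private lemma exists_repr (m : ℕ) (hm : 0 < m) (a : Fin m → ℂ) (ha1 : a ⟨0, hm⟩ ≠ 0)
    (s : ℤ → ℂ) (hrec : ∀ k : ℤ, s (k + m) = ∑ i : Fin m, a i * s (k + (i : ℕ)))
    (rt : Fin m → ℂ) (hrt0 : ∀ i, rt i ≠ 0)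
    (hroot : ∀ i, rt i ^ m = ∑ j : Fin m, a j * rt i ^ (j : ℕ))
    (hrt : Function.Injective rt) :
    ∃ c : Fin m → ℂ, ∀ k : ℤ, s k = ∑ i : Fin m, c i * rt i ^ k := by
  set A : Matrix (Fin m) (Fin m) ℂ := Matrix.transpose (Matrix.vandermonde rt) with hA
  have hdet : A.det ≠ 0 := by
    rw [hA, Matrix.det_transpose]
    exact Matrix.det_vandermonde_ne_zero_iff.mpr hrt
  set c : Fin m → ℂ := A⁻¹.mulVec (fun j => s j) with hc
  have hAc : A.mulVec c = fun j : Fin m => s ((j : ℕ) : ℤ) := by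
    rw [hc, Matrix.mulVec_mulVec, Matrix.mul_nonsing_inv A (isUnit_iff_ne_zero.mpr hdet),
      Matrix.one_mulVec]
  refine ⟨c, ?_⟩
  set v : ℤ → ℂ := fun k => ∑ i : Fin m, c i * rt i ^ k with hv
  have hvrec : ∀ k : ℤ, v (k + m) = ∑ i : Fin m, a i * v (k + (i : ℕ)) := by
    intro k
    rw [hv]
    simp only
    calc ∑ i : Fin m, c i * rt i ^ (k + (m : ℕ))
        = ∑ i : Fin m, ∑ j : Fin m, a j * (c i * rt i ^ (k + (j : ℕ))) := by
          apply Finset.sum_congr rfl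
          intro i _
          rw [zpow_add₀ (hrt0 i), zpow_natCast, hroot i, Finset.mul_sum, Finset.mul_sum]
          apply Finset.sum_congr rfl
          intro j _
          rw [zpow_add₀ (hrt0 i), zpow_natCast]
          ring
      _ = ∑ j : Fin m, a j * ∑ i : Fin m, c i * rt i ^ (k + (j : ℕ)) := by
          rw [Finset.sum_comm]
          simp_rw [Finset.mul_sum]
  set u : ℤ → ℂ := fun k => s k - v k with hu
  have hurec : ∀ k : ℤ, u (k + m) = ∑ i : Fin m, a i * u (k + (i : ℕ)) := by
    intro k
    rw [hu]
    simp only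
    rw [hrec k, hvrec k, ← Finset.sum_sub_distrib]
    apply Finset.sum_congr rfl
    intro i _
    ring
  have hu0 : ∀ i : Fin m, u i = 0 := by
    intro i
    have h1 : v i = s i := by
      have := congrFun hAc i
      rw [Matrix.mulVec, dotProduct] at this
      rw [hv]
      simp only
      rw [← this]
      apply Finset.sum_congr rfl
      intro j _
      rw [hA]
      simp [Matrix.vandermonde, zpow_natCast]
      ring
    rw [hu]
    simp only
    rw [h1, sub_self]
  have := seq_ext_zero m hm a ha1 u hurec hu0
  intro k
  have hk := this k
  rw [hu] at hk
  simp only at hk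
  exact sub_eq_zero.mp hk

private lemma c_ne_zero (m : ℕ) (hm : 2 ≤ m)
    (s : ℤ → ℂ)
    (hmin : ∀ d : ℕ, d < m → ∀ b : Fin d → ℂ,
      ¬ (∀ k : ℤ, s (k + d) = ∑ i : Fin d, b i * s (k + (i : ℕ))))
    (rt : Fin m → ℂ) (hrt0 : ∀ i, rt i ≠ 0) (hrt : Function.Injective rt)
    (c : Fin m → ℂ) (hc : ∀ k : ℤ, s k = ∑ i : Fin m, c i * rt i ^ k) :
    ∀ i, c i ≠ 0 := by
  intro i0 hi0
  set t : Finset (Fin m) := Finset.univ.erase i0 with ht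
  set q : ℂ[X] := ∏ j ∈ t, (X - C (rt j)) with hq
  have hmonic : q.Monic := monic_prod_of_monic _ _ fun j _ => monic_X_sub_C _
  have hcard : t.card = m - 1 := by
    rw [ht, Finset.card_erase_of_mem (Finset.mem_univ _), Finset.card_univ, Fintype.card_fin]
  have hdeg : q.natDegree = m - 1 := by
    rw [hq, natDegree_prod _ _ (fun j _ => X_sub_C_ne_zero (rt j))]
    simp [hcard]
  have hqeval : ∀ j ∈ t, q.eval (rt j) = 0 := by
    intro j hj
    rw [hq, eval_prod]
    exact Finset.prod_eq_zero hj (by simp)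
  have hsrepr : ∀ k : ℤ, s k = ∑ j ∈ t, c j * rt j ^ k := by
    intro k
    rw [hc k, ← Finset.sum_erase_add _ _ (Finset.mem_univ i0), hi0, zero_mul, add_zero]
  have hsum : ∀ k : ℤ, ∑ l ∈ Finset.range m, q.coeff l * s (k + l) = 0 := by
    intro k
    calc ∑ l ∈ Finset.range m, q.coeff l * s (k + l)
        = ∑ l ∈ Finset.range m, ∑ j ∈ t, (c j * rt j ^ k) * (q.coeff l * rt j ^ l) := by
          apply Finset.sum_congr rfl
          intro l _
          rw [hsrepr, Finset.mul_sum]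
          apply Finset.sum_congr rfl
          intro j _
          rw [zpow_add₀ (hrt0 j), zpow_natCast]
          ring
      _ = ∑ j ∈ t, (c j * rt j ^ k) * ∑ l ∈ Finset.range m, q.coeff l * rt j ^ l := by
          rw [Finset.sum_comm]
          apply Finset.sum_congr rfl
          intro j _
          rw [Finset.mul_sum]
      _ = 0 := by
          apply Finset.sum_eq_zero
          intro j hj
          have : ∑ l ∈ Finset.range m, q.coeff l * rt j ^ l = q.eval (rt j) := by
            rw [eval_eq_sum_range' (by omega : q.natDegree < m)]
          rw [this, hqeval j hj, mul_zero]
  have hmain : ∀ k : ℤ, s (k + ((m - 1 : ℕ) : ℤ))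
      = ∑ l : Fin (m - 1), (-(q.coeff l)) * s (k + (l : ℕ)) := by
    intro k
    have h1 := hsum k
    have hm1 : m = (m - 1) + 1 := by omega
    rw [hm1, Finset.sum_range_succ] at h1
    have hc1 : q.coeff (m - 1) = 1 := by
      have := hmonic.coeff_natDegree
      rwa [hdeg] at this
    rw [hc1, one_mul] at h1
    rw [Fin.sum_univ_eq_sum_range (fun l => (-(q.coeff l)) * s (k + (l : ℕ)))]
    have : ∑ l ∈ Finset.range (m - 1), (-(q.coeff l)) * s (k + (l : ℕ))
        = -∑ l ∈ Finset.range (m - 1), q.coeff l * s (k + (l : ℕ)) := by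
      rw [← Finset.sum_neg_distrib]
      apply Finset.sum_congr rfl
      intro l _
      ring
    rw [this]
    linear_combination h1
  exact hmin (m - 1) (by omega) (fun l => -(q.coeff l)) hmain

/-- Theorem 2 of the paper: there is exactly one tuple
`(P_1,…,P_{m+1}) ∈ ℂ[x]^{m+1}` satisfying the identity
`∑_{k=1}^n P(k)·s_{hk+r} = ∑_{k=1}^m P_k(n)·s_{(n+k)h+r} + P_{m+1}(n)` for all `n ≥ 1`. -/
theorem stmt_1 (m : ℕ) (hm : 2 ≤ m) (a : Fin m → ℂ)
    (ha1 : a ⟨0, by omega⟩ ≠ 0)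
    (s : ℤ → ℂ)
    (hrec : ∀ k : ℤ, s (k + m) = ∑ i : Fin m, a i * s (k + (i : ℕ)))
    (hmin : ∀ d : ℕ, d < m → ∀ b : Fin d → ℂ,
      ¬ (∀ k : ℤ, s (k + d) = ∑ i : Fin d, b i * s (k + (i : ℕ))))
    (hs : ∃ i ∈ Finset.Icc (1 : ℤ) (m : ℤ), s i ≠ 0)
    (rt : Fin m → ℂ)
    (hroot : ∀ i, rt i ^ m = ∑ j : Fin m, a j * rt i ^ (j : ℕ))
    (hrt : Function.Injective rt)
    (P : Polynomial ℂ) (h r : ℤ) (hh : h ≠ 0)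
    (hdist : ∀ i j : Fin m, rt i ^ h = rt j ^ h → i = j)
    (hne1 : ∀ i : Fin m, rt i ^ h ≠ 1) :
    ∃! Ps : Fin (m + 1) → Polynomial ℂ,
      ∀ n : ℕ, 0 < n →
        ∑ k ∈ Finset.Icc 1 n, P.eval (k : ℂ) * s (h * (k : ℤ) + r) =
          (∑ k : Fin m, (Ps k.castSucc).eval (n : ℂ) * s (((n : ℤ) + ((k : ℕ) : ℤ) + 1) * h + r))
            + (Ps (Fin.last m)).eval (n : ℂ) := by
  have hm0 : 0 < m := by omega
  -- roots are nonzero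
  have hrt0 : ∀ i, rt i ≠ 0 := by
    intro i hi
    apply ha1
    have h1 := hroot i
    rw [hi, zero_pow (by omega : m ≠ 0)] at h1
    rw [Finset.sum_eq_single ⟨0, hm0⟩] at h1
    · simpa using h1.symm
    · intro j _ hjne
      have : (j : ℕ) ≠ 0 := fun h0 => hjne (Fin.ext h0)
      rw [zero_pow this, mul_zero]
    · intro habs
      exact absurd (Finset.mem_univ _) habs
  obtain ⟨c, hcrep⟩ := exists_repr m hm0 a ha1 s hrec rt hrt0 hroot hrt
  have hc0 : ∀ i, c i ≠ 0 := c_ne_zero m hm s hmin rt hrt0 hrt c hcrep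
  set x : Fin m → ℂ := fun i => rt i ^ h with hx
  set e : Fin m → ℂ := fun i => c i * rt i ^ r with he
  have hx0 : ∀ i, x i ≠ 0 := fun i => zpow_ne_zero h (hrt0 i)
  have he0 : ∀ i, e i ≠ 0 := fun i => mul_ne_zero (hc0 i) (zpow_ne_zero r (hrt0 i))
  have hxinj : Function.Injective x := fun i j hij => hdist i j hij
  have key : ∀ k : ℤ, s (h * k + r) = ∑ i : Fin m, e i * x i ^ k := by
    intro k
    rw [hcrep]
    apply Finset.sum_congr rfl
    intro i _
    rw [zpow_add₀ (hrt0 i), zpow_mul]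
    ring
  have gkey : ∀ (n : ℕ) (k : Fin m),
      s (((n : ℤ) + ((k : ℕ) : ℤ) + 1) * h + r)
        = ∑ j : Fin m, (e j * x j ^ ((k : ℕ) + 1)) * x j ^ n := by
    intro n k
    have h1 : ((n : ℤ) + ((k : ℕ) : ℤ) + 1) * h + r = h * ((n : ℤ) + ((k : ℕ) : ℤ) + 1) + r := by
      ring
    rw [h1, key]
    apply Finset.sum_congr rfl
    intro j _
    have h2 : x j ^ ((n : ℤ) + ((k : ℕ) : ℤ) + 1) = x j ^ ((n + ((k : ℕ) + 1) : ℕ)) := by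
      rw [← zpow_natCast (x j) (n + ((k : ℕ) + 1))]
      congr 1
      all_goals (push_cast; ring)
    rw [h2, pow_add]
    ring
  set M : Matrix (Fin m) (Fin m) ℂ := Matrix.of (fun j k : Fin m => e j * x j ^ ((k : ℕ) + 1))
    with hM
  have hMeq : ∀ j k : Fin m, M j k = e j * x j ^ ((k : ℕ) + 1) := fun j k => rfl
  have hMdet : M.det ≠ 0 := by
    have hfac : M = Matrix.diagonal (fun j => e j * x j) * Matrix.vandermonde x := by
      ext j k
      rw [Matrix.diagonal_mul, hMeq, Matrix.vandermonde]
      simp only [Matrix.of_apply]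
      rw [pow_succ']
      ring
    rw [hfac, Matrix.det_mul, Matrix.det_diagonal]
    exact mul_ne_zero
      (Finset.prod_ne_zero_iff.mpr fun j _ => mul_ne_zero (he0 j) (hx0 j))
      (Matrix.det_vandermonde_ne_zero_iff.mpr hxinj)
  have hMunit : IsUnit M.det := isUnit_iff_ne_zero.mpr hMdet
  set W : Matrix (Fin m) (Fin m) ℂ := M⁻¹ with hW
  have hMW : M * W = 1 := Matrix.mul_nonsing_inv M hMunit
  have hWM : W * M = 1 := Matrix.nonsing_inv_mul M hMunit
  choose Q hQ using fun i => sum_geom_poly (x i) (hne1 i) P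
  set Ps : Fin (m + 1) → ℂ[X] :=
    Fin.lastCases (C (-∑ i : Fin m, e i * (Q i).eval 0))
      (fun k => ∑ j : Fin m, C (W k j * e j) * Q j) with hPs
  have hPsCS : ∀ k : Fin m, Ps k.castSucc = ∑ j : Fin m, C (W k j * e j) * Q j := by
    intro k
    rw [hPs]
    exact Fin.lastCases_castSucc ..
  have hPsL : Ps (Fin.last m) = C (-∑ i : Fin m, e i * (Q i).eval 0) := by
    rw [hPs]
    exact Fin.lastCases_last ..
  -- main identity for our Ps (for every n)
  have hPs_prop : ∀ n : ℕ,
      ∑ k ∈ Finset.Icc 1 n, P.eval (k : ℂ) * s (h * (k : ℤ) + r) =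
        (∑ k : Fin m, (Ps k.castSucc).eval (n : ℂ) * s (((n : ℤ) + ((k : ℕ) : ℤ) + 1) * h + r))
          + (Ps (Fin.last m)).eval (n : ℂ) := by
    intro n
    have hLHS : ∑ k ∈ Finset.Icc 1 n, P.eval (k : ℂ) * s (h * (k : ℤ) + r)
        = ∑ i : Fin m, e i * ((Q i).eval (n : ℂ) * x i ^ n - (Q i).eval 0) := by
      calc ∑ k ∈ Finset.Icc 1 n, P.eval (k : ℂ) * s (h * (k : ℤ) + r)
          = ∑ k ∈ Finset.Icc 1 n, ∑ i : Fin m, e i * (P.eval (k : ℂ) * x i ^ k) := by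
            apply Finset.sum_congr rfl
            intro k _
            rw [key ((k : ℕ) : ℤ), Finset.mul_sum]
            apply Finset.sum_congr rfl
            intro i _
            rw [zpow_natCast]
            ring
        _ = ∑ i : Fin m, e i * ∑ k ∈ Finset.Icc 1 n, P.eval (k : ℂ) * x i ^ k := by
            rw [Finset.sum_comm]
            apply Finset.sum_congr rfl
            intro i _
            rw [Finset.mul_sum]
        _ = ∑ i : Fin m, e i * ((Q i).eval (n : ℂ) * x i ^ n - (Q i).eval 0) := by
            apply Finset.sum_congr rfl
            intro i _
            rw [hQ i n]
    have hRHSsum : ∑ k : Fin m, (Ps k.castSucc).eval (n : ℂ)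
          * s (((n : ℤ) + ((k : ℕ) : ℤ) + 1) * h + r)
        = ∑ j : Fin m, e j * ((Q j).eval (n : ℂ) * x j ^ n) := by
      calc ∑ k : Fin m, (Ps k.castSucc).eval (n : ℂ) * s (((n : ℤ) + ((k : ℕ) : ℤ) + 1) * h + r)
          = ∑ k : Fin m, ∑ j : Fin m, ∑ j' : Fin m,
              (M j k * W k j') * (e j' * ((Q j').eval (n : ℂ)) * x j ^ n) := by
            apply Finset.sum_congr rfl
            intro k _
            rw [gkey n k, hPsCS k, eval_finset_sum]
            rw [Finset.sum_mul_sum]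
            rw [Finset.sum_comm]
            apply Finset.sum_congr rfl
            intro j _
            apply Finset.sum_congr rfl
            intro j' _
            rw [hMeq, eval_mul, eval_C]
            ring
        _ = ∑ j : Fin m, ∑ j' : Fin m,
              ((M * W) j j') * (e j' * ((Q j').eval (n : ℂ)) * x j ^ n) := by
            rw [Finset.sum_comm]
            apply Finset.sum_congr rfl
            intro j _
            rw [Finset.sum_comm]
            apply Finset.sum_congr rfl
            intro j' _
            rw [Matrix.mul_apply, Finset.sum_mul]
        _ = ∑ j : Fin m, e j * ((Q j).eval (n : ℂ) * x j ^ n) := by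
            rw [hMW]
            apply Finset.sum_congr rfl
            intro j _
            calc ∑ j' : Fin m,
                (1 : Matrix (Fin m) (Fin m) ℂ) j j' * (e j' * ((Q j').eval (n : ℂ)) * x j ^ n)
                = ∑ j' : Fin m, (if j = j' then e j' * ((Q j').eval (n : ℂ)) * x j ^ n else 0) := by
                  apply Finset.sum_congr rfl
                  intro j' _
                  rw [Matrix.one_apply]
                  split <;> simp
              _ = e j * ((Q j).eval (n : ℂ) * x j ^ n) := by
                  rw [Finset.sum_ite_eq]
                  simp [mul_assoc]
    rw [hLHS, hRHSsum, hPsL, eval_C]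
    simp_rw [mul_sub]
    rw [Finset.sum_sub_distrib, sub_eq_add_neg]
  refine ⟨Ps, fun n _ => hPs_prop n, ?_⟩
  intro Ps' hPs'
  set D : Fin (m + 1) → ℂ[X] := fun j => Ps' j - Ps j with hD
  set y : Fin (m + 1) → ℂ := Fin.lastCases 1 x with hy
  set R : Fin (m + 1) → ℂ[X] :=
    Fin.lastCases (D (Fin.last m)) (fun j => ∑ k : Fin m, C (M j k) * D k.castSucc) with hR
  have hyCS : ∀ j : Fin m, y j.castSucc = x j := fun j => Fin.lastCases_castSucc ..
  have hyL : y (Fin.last m) = 1 := Fin.lastCases_last ..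
  have hRCS : ∀ j : Fin m, R j.castSucc = ∑ k : Fin m, C (M j k) * D k.castSucc :=
    fun j => Fin.lastCases_castSucc ..
  have hRL : R (Fin.last m) = D (Fin.last m) := Fin.lastCases_last ..
  have hy0 : ∀ i ∈ (Finset.univ : Finset (Fin (m + 1))), y i ≠ 0 := by
    intro i _
    induction i using Fin.lastCases with
    | last => rw [hyL]; exact one_ne_zero
    | cast j => rw [hyCS]; exact hx0 j
  have hyinj : Set.InjOn y (Finset.univ : Finset (Fin (m + 1))) := by
    intro i _ j _ hij
    induction i using Fin.lastCases with
    | last =>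
      induction j using Fin.lastCases with
      | last => rfl
      | cast j' =>
        rw [hyL, hyCS] at hij
        exact absurd hij.symm (hne1 j')
    | cast i' =>
      induction j using Fin.lastCases with
      | last =>
        rw [hyL, hyCS] at hij
        exact absurd hij (hne1 i')
      | cast j' =>
        rw [hyCS, hyCS] at hij
        rw [hxinj hij]
  have hvanR : ∀ n : ℕ, 1 ≤ n → ∑ j : Fin (m + 1), (R j).eval (n : ℂ) * y j ^ n = 0 := by
    intro n hn
    have e1 := hPs' n hn
    have e2 := hPs_prop n
    have e3 : (∑ k : Fin m, (D k.castSucc).eval (n : ℂ)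
          * s (((n : ℤ) + ((k : ℕ) : ℤ) + 1) * h + r)) + (D (Fin.last m)).eval (n : ℂ) = 0 := by
      simp only [hD, eval_sub]
      simp_rw [sub_mul]
      rw [Finset.sum_sub_distrib]
      linear_combination e2 - e1
    calc ∑ j : Fin (m + 1), (R j).eval (n : ℂ) * y j ^ n
        = (∑ j : Fin m, (R j.castSucc).eval (n : ℂ) * y j.castSucc ^ n)
            + (R (Fin.last m)).eval (n : ℂ) * y (Fin.last m) ^ n := Fin.sum_univ_castSucc _
      _ = (∑ k : Fin m, (D k.castSucc).eval (n : ℂ)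
            * s (((n : ℤ) + ((k : ℕ) : ℤ) + 1) * h + r)) + (D (Fin.last m)).eval (n : ℂ) := by
          rw [hRL, hyL, one_pow, mul_one]
          congr 1
          calc ∑ j : Fin m, (R j.castSucc).eval (n : ℂ) * y j.castSucc ^ n
              = ∑ j : Fin m, ∑ k : Fin m,
                  (D k.castSucc).eval (n : ℂ) * (M j k * x j ^ n) := by
                apply Finset.sum_congr rfl
                intro j _
                rw [hRCS, hyCS, eval_finset_sum, Finset.sum_mul]
                apply Finset.sum_congr rfl
                intro k _
                rw [eval_mul, eval_C]
                ring
            _ = ∑ k : Fin m, (D k.castSucc).eval (n : ℂ)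
                  * ∑ j : Fin m, M j k * x j ^ n := by
                rw [Finset.sum_comm]
                apply Finset.sum_congr rfl
                intro k _
                rw [Finset.mul_sum]
            _ = ∑ k : Fin m, (D k.castSucc).eval (n : ℂ)
                  * s (((n : ℤ) + ((k : ℕ) : ℤ) + 1) * h + r) := by
                apply Finset.sum_congr rfl
                intro k _
                rw [gkey n k]
                rfl
      _ = 0 := e3
  have hRzero := poly_exp_indep 1 Finset.univ y R hy0 hyinj hvanR
  have hDlast : D (Fin.last m) = 0 := by
    rw [← hRL]
    exact hRzero (Fin.last m) (Finset.mem_univ _)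
  have hDcs : ∀ k0 : Fin m, D k0.castSucc = 0 := by
    intro k0
    have h0 : ∑ j : Fin m, C (W k0 j) * (∑ k : Fin m, C (M j k) * D k.castSucc) = 0 := by
      apply Finset.sum_eq_zero
      intro j _
      rw [← hRCS, hRzero j.castSucc (Finset.mem_univ _), mul_zero]
    calc D k0.castSucc
        = ∑ k : Fin m, (if k0 = k then D k.castSucc else 0) := by
          rw [Finset.sum_ite_eq]
          simp
      _ = ∑ k : Fin m, C ((W * M) k0 k) * D k.castSucc := by
          apply Finset.sum_congr rfl
          intro k _
          rw [hWM, Matrix.one_apply]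
          split <;> simp
      _ = ∑ j : Fin m, C (W k0 j) * (∑ k : Fin m, C (M j k) * D k.castSucc) := by
          symm
          calc ∑ j : Fin m, C (W k0 j) * (∑ k : Fin m, C (M j k) * D k.castSucc)
              = ∑ j : Fin m, ∑ k : Fin m, C (W k0 j * M j k) * D k.castSucc := by
                apply Finset.sum_congr rfl
                intro j _
                rw [Finset.mul_sum]
                apply Finset.sum_congr rfl
                intro k _
                rw [← mul_assoc, ← C_mul]
            _ = ∑ k : Fin m, ∑ j : Fin m, C (W k0 j * M j k) * D k.castSucc := Finset.sum_comm
            _ = ∑ k : Fin m, C ((W * M) k0 k) * D k.castSucc := by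
                apply Finset.sum_congr rfl
                intro k _
                rw [← Finset.sum_mul, ← map_sum, Matrix.mul_apply]
      _ = 0 := h0
  funext j
  have hDj : D j = 0 := by
    induction j using Fin.lastCases with
    | last => exact hDlast
    | cast j' => exact hDcs j'
  rw [hD] at hDj
  simp only at hDj
  exact sub_eq_zero.mp hDj
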